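/- arXiv:1908.10096 — 4 statements merged into one kernel-verified Lean document; each statement's English description precedes it below -/
import Mathlib

section
/- For all positive reals y and z, (y - z)(log y - log z) ≥ (1/4)(√y - √z)². -/
/-! With `a = √y` and `b = √z`, the elementary bound `log x ≥ 1 - 1/x` gives
`(y - z)(log y - log z) ≥ (y - z)² / (y + z) = (a - b)² (a + b)² / (a² + b²) ≥ (a - b)²`,
which is four times more than needed. -/

open Real

lemma sq_sub_div_le_sub_mul_log_sub_log_of_le {y z : ℝ} (hz : 0 < z) (hzy : z ≤ y) :
    (y - z) ^ 2 / y ≤ (y - z) * (log y - log z) := by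
  have hy : 0 < y := hz.trans_le hzy
  have hlog : (y - z) / y ≤ log y - log z := by
    have := one_sub_inv_le_log_of_pos (div_pos hy hz)
    rwa [inv_div, one_sub_div hy.ne', log_div hy.ne' hz.ne'] at this
  calc (y - z) ^ 2 / y = (y - z) * ((y - z) / y) := by ring
    _ ≤ (y - z) * (log y - log z) := mul_le_mul_of_nonneg_left hlog (sub_nonneg.2 hzy)

lemma sq_sub_div_add_le_sub_mul_log_sub_log {y z : ℝ} (hy : 0 < y) (hz : 0 < z) :
    (y - z) ^ 2 / (y + z) ≤ (y - z) * (log y - log z) := by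
  wlog hzy : z ≤ y generalizing y z
  · convert this hz hy (le_of_not_ge hzy) using 1 <;> ring
  calc (y - z) ^ 2 / (y + z) ≤ (y - z) ^ 2 / y :=
        div_le_div_of_nonneg_left (sq_nonneg _) hy (by linarith)
    _ ≤ (y - z) * (log y - log z) := sq_sub_div_le_sub_mul_log_sub_log_of_le hz hzy

lemma sq_sqrt_sub_sqrt_mul_add_le_sq_sub {y z : ℝ} (hy : 0 ≤ y) (hz : 0 ≤ z) :
    (√y - √z) ^ 2 * (y + z) ≤ (y - z) ^ 2 := by
  -- `(a² - b²)² - (a - b)² (a² + b²) = 2ab (a - b)²`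
  have := mul_nonneg (mul_nonneg (sq_nonneg (√y - √z)) (sqrt_nonneg y)) (sqrt_nonneg z)
  nlinarith [sq_sqrt hy, sq_sqrt hz]

theorem log_diff_ge_quarter_sqrt_sq (y z : ℝ) (hy : 0 < y) (hz : 0 < z) :
    (y - z) * (Real.log y - Real.log z) ≥ (1 / 4) * (Real.sqrt y - Real.sqrt z) ^ 2 := by
  calc (1 / 4) * (√y - √z) ^ 2 ≤ (√y - √z) ^ 2 := by nlinarith [sq_nonneg (√y - √z)]
    _ ≤ (y - z) ^ 2 / (y + z) :=
        (le_div_iff₀ (add_pos hy hz)).2 (sq_sqrt_sub_sqrt_mul_add_le_sq_sub hy.le hz.le)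
    _ ≤ (y - z) * (log y - log z) := sq_sub_div_add_le_sub_mul_log_sub_log hy hz
end

section
/- For all positive reals y and z, y·log(y/z) - y + z ≥ (y - z)²/(2·max{y, z}). -/
/-!
If `z ≤ y`, then `u = 1 - z / y ∈ [0, 1)` and the first two terms of the series
`-log (1 - u) = ∑ uⁿ⁺¹ / (n + 1)` give `log (y / z) ≥ u + u² / 2`, which is exactly the claim.
If `y ≤ z`, then `x = z / y ≥ 1` and `log x ≤ sinh (log x) = (x - x⁻¹) / 2` is again exactly the claim.
-/

open Real

noncomputable def relEntropyDensity (y z : ℝ) : ℝ := y * log (y / z) - y + z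

lemma add_sq_div_two_le_neg_log_one_sub {u : ℝ} (hu₀ : 0 ≤ u) (hu₁ : u < 1) :
    u + u ^ 2 / 2 ≤ -log (1 - u) := by
  have hsum := hasSum_pow_div_log_of_abs_lt_one (abs_lt.mpr ⟨by linarith, hu₁⟩)
  have hpartial := sum_le_hasSum (Finset.range 2) (fun n _ => by positivity) hsum
  norm_num [Finset.sum_range_succ] at hpartial
  linarith

lemma log_le_half_sub_inv {x : ℝ} (hx : 1 ≤ x) : log x ≤ (x - x⁻¹) / 2 := by
  rw [← sinh_log (by positivity)]
  exact self_le_sinh_iff.mpr (log_nonneg hx)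

lemma sq_div_le_relEntropyDensity_of_le {y z : ℝ} (hz : 0 < z) (hzy : z ≤ y) :
    (y - z) ^ 2 / (2 * y) ≤ relEntropyDensity y z := by
  have hy : 0 < y := hz.trans_le hzy
  have hlog : (1 - z / y) + (1 - z / y) ^ 2 / 2 ≤ log (y / z) := by
    have h := add_sq_div_two_le_neg_log_one_sub
      (sub_nonneg.mpr ((div_le_one hy).mpr hzy)) (sub_lt_self 1 (div_pos hz hy))
    rwa [sub_sub_cancel, ← log_inv, inv_div] at h
  calc (y - z) ^ 2 / (2 * y) = y * ((1 - z / y) + (1 - z / y) ^ 2 / 2) - y + z := by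
        field_simp; ring
    _ ≤ relEntropyDensity y z := by
        unfold relEntropyDensity; gcongr

lemma sq_div_le_relEntropyDensity_of_ge {y z : ℝ} (hy : 0 < y) (hyz : y ≤ z) :
    (y - z) ^ 2 / (2 * z) ≤ relEntropyDensity y z := by
  have hz : 0 < z := hy.trans_le hyz
  have hlog : (y / z - z / y) / 2 ≤ log (y / z) := by
    have h := log_le_half_sub_inv ((one_le_div hy).mpr hyz)
    rw [inv_div] at h
    rw [← neg_le_neg_iff, ← log_inv, inv_div]
    linarith
  calc (y - z) ^ 2 / (2 * z) = y * ((y / z - z / y) / 2) - y + z := by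
        field_simp; ring
    _ ≤ relEntropyDensity y z := by
        unfold relEntropyDensity; gcongr

theorem rel_entropy_lower_bound (y z : ℝ) (hy : 0 < y) (hz : 0 < z) :
    y * Real.log (y / z) - y + z ≥ (y - z) ^ 2 / (2 * max y z) := by
  change (y - z) ^ 2 / (2 * max y z) ≤ relEntropyDensity y z
  rcases le_total z y with hzy | hyz
  · rw [max_eq_left hzy]
    exact sq_div_le_relEntropyDensity_of_le hz hzy
  · rw [max_eq_right hyz]
    exact sq_div_le_relEntropyDensity_of_ge hy hyz
end

section
/- For all positive reals y and z, y·log(y/z) - y + z ≤ (y - z)²/(2·min{y, z}). -/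
/-!
With `t = y / z` both sides scale by `z`: the left side is `z * klFun t` and the right side is
`z * (t - 1)² / (2 min t 1)`. For `t ≥ 1` use `log t ≤ sinh (log t) = (t - t⁻¹) / 2`; for `t ≤ 1`
the lower bound `log s ≥ 2 (s - 1) / (s + 1)` at `s = t⁻¹` even gives `klFun t ≤ (t - 1)² / (t + 1)`.
-/

open Real InformationTheory

lemma log_le_sub_inv_div_two {t : ℝ} (ht : 1 ≤ t) : log t ≤ (t - t⁻¹) / 2 := by
  rw [← sinh_log (by positivity)]
  exact self_le_sinh_iff.mpr (log_nonneg ht)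

lemma log_le_two_mul_sub_one_div_add_one {t : ℝ} (ht : 0 < t) (ht1 : t ≤ 1) :
    log t ≤ 2 * (t - 1) / (t + 1) := by
  have h := le_log_one_add_of_nonneg (x := t⁻¹ - 1) (by simpa using (one_le_inv₀ ht).mpr ht1)
  rw [add_sub_cancel, log_inv] at h
  have hrw : 2 * (t⁻¹ - 1) / (t⁻¹ - 1 + 2) = -(2 * (t - 1) / (t + 1)) := by
    rw [show t⁻¹ - 1 + 2 = (t + 1) / t by field_simp; ring]
    field_simp
    ring
  linarith

lemma klFun_le_sq_div_two_of_one_le {t : ℝ} (ht : 1 ≤ t) : klFun t ≤ (t - 1) ^ 2 / 2 := by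
  have h0 : 0 < t := by positivity
  have h := mul_le_mul_of_nonneg_left (log_le_sub_inv_div_two ht) h0.le
  rw [klFun_apply]
  field_simp at h ⊢
  nlinarith

lemma klFun_le_sq_div_add_one {t : ℝ} (ht : 0 < t) (ht1 : t ≤ 1) :
    klFun t ≤ (t - 1) ^ 2 / (t + 1) := by
  have h := mul_le_mul_of_nonneg_left (log_le_two_mul_sub_one_div_add_one ht ht1) ht.le
  rw [mul_div_assoc', le_div_iff₀ (by positivity)] at h
  rw [klFun_apply, le_div_iff₀ (by positivity)]
  nlinarith

lemma klFun_le_sq_div_two_min {t : ℝ} (ht : 0 < t) :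
    klFun t ≤ (t - 1) ^ 2 / (2 * min t 1) := by
  rcases le_total 1 t with h | h
  · simpa [min_eq_right h] using klFun_le_sq_div_two_of_one_le h
  · rw [min_eq_left h]
    refine (klFun_le_sq_div_add_one ht h).trans ?_
    gcongr
    linarith

theorem rel_entropy_upper_bound (y z : ℝ) (hy : 0 < y) (hz : 0 < z) :
    y * Real.log (y / z) - y + z ≤ (y - z) ^ 2 / (2 * min y z) := by
  have hmin : min y z = z * min (y / z) 1 := by
    rw [mul_min_of_nonneg _ _ hz.le, mul_div_cancel₀ _ hz.ne', mul_one]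
  calc y * log (y / z) - y + z = z * klFun (y / z) := by
        rw [klFun_apply]
        field_simp
        ring
    _ ≤ z * ((y / z - 1) ^ 2 / (2 * min (y / z) 1)) :=
        mul_le_mul_of_nonneg_left (klFun_le_sq_div_two_min (div_pos hy hz)) hz.le
    _ = (y - z) ^ 2 / (2 * min y z) := by
        rw [hmin]
        field_simp
end

section
/- The 4×4 matrix D/(1-p²) · [[1, -p μ⃗ᵀ],[-p μ⃗, η I + (1-η) μ⃗⊗μ⃗]], where η = √(1-p²), D > 0, p ∈ [0,1), and μ⃗ ∈ ℝ³ is a unit vector, is symmetric positive definite. -/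
/-!
Write a vector as `(a, v)` with `a` scalar and `v ∈ ℝ³`, and put `s = μ ⬝ v`. Because `μ` is a
unit vector, the quadratic form of the bracketed matrix is
`(a - p s)² + (1 - p²) s² + η |v - s μ|²`,
a sum of squares with positive weights which vanishes only when `s = 0`, `v = s μ` and `a = p s`,
i.e. at the origin.
-/

open Matrix

namespace SpinDiffusion

variable {n : Type*} [Fintype n]

theorem dotProduct_self_sub_smul_of_dotProduct_self_eq_one {μ : n → ℝ} (hμ : μ ⬝ᵥ μ = 1)
    (v : n → ℝ) :
    (v - (μ ⬝ᵥ v) • μ) ⬝ᵥ (v - (μ ⬝ᵥ v) • μ) = v ⬝ᵥ v - (μ ⬝ᵥ v) ^ 2 := by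
  simp only [sub_dotProduct, dotProduct_sub, smul_dotProduct, dotProduct_smul, hμ,
    dotProduct_comm v μ, smul_eq_mul]
  ring

variable [DecidableEq n]

def blockMatrix (p η : ℝ) (μ : n → ℝ) : Matrix (Fin 1 ⊕ n) (Fin 1 ⊕ n) ℝ :=
  fromBlocks 1 (of fun _ j => -p * μ j) (of fun i _ => -p * μ i)
    (η • 1 + (1 - η) • vecMulVec μ μ)

omit [Fintype n] in
theorem blockMatrix_isSymm (p η : ℝ) (μ : n → ℝ) : (blockMatrix p η μ).IsSymm :=
  isSymm_one.fromBlocks rfl <|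
    (isSymm_one.smul η).add (IsSymm.smul (transpose_vecMulVec μ μ) (1 - η))

theorem dotProduct_mulVec_blockMatrix (p η : ℝ) (μ : n → ℝ) (a : Fin 1 → ℝ) (v : n → ℝ) :
    Sum.elim a v ⬝ᵥ (blockMatrix p η μ *ᵥ Sum.elim a v) =
      a 0 ^ 2 - 2 * p * a 0 * (μ ⬝ᵥ v) + η * (v ⬝ᵥ v) + (1 - η) * (μ ⬝ᵥ v) ^ 2 := by
  have hrow : (of fun _ j => -p * μ j : Matrix (Fin 1) n ℝ) *ᵥ v = fun _ => -p * (μ ⬝ᵥ v) := by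
    ext; simp [mulVec, dotProduct, Finset.mul_sum, mul_assoc]
  have hcol : (of fun i _ => -p * μ i : Matrix n (Fin 1) ℝ) *ᵥ a = (-p * a 0) • μ := by
    ext; simp [mulVec, dotProduct]; ring
  simp only [blockMatrix, fromBlocks_mulVec, Sum.elim_comp_inl, Sum.elim_comp_inr,
    sumElim_dotProduct_sumElim, one_mulVec, add_mulVec, smul_mulVec, vecMulVec_mulVec,
    hrow, hcol, dotProduct_add, dotProduct_smul, dotProduct_comm v μ]
  simp [dotProduct]
  ring

theorem blockMatrix_posDef {p η : ℝ} {μ : n → ℝ} (hp : p ^ 2 < 1) (hη : 0 < η)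
    (hμ : μ ⬝ᵥ μ = 1) : (blockMatrix p η μ).PosDef := by
  refine .of_dotProduct_mulVec_pos (blockMatrix_isSymm p η μ) fun x hx => ?_
  obtain ⟨a, v, rfl⟩ : ∃ a v, x = Sum.elim a v := ⟨_, _, (Sum.elim_comp_inl_inr x).symm⟩
  set s := μ ⬝ᵥ v
  set w := v - s • μ
  have hQ : Sum.elim a v ⬝ᵥ (blockMatrix p η μ *ᵥ Sum.elim a v) =
      (a 0 - p * s) ^ 2 + (1 - p ^ 2) * s ^ 2 + η * (w ⬝ᵥ w) := by
    rw [dotProduct_mulVec_blockMatrix, dotProduct_self_sub_smul_of_dotProduct_self_eq_one hμ]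
    ring
  have hp' : 0 < 1 - p ^ 2 := sub_pos.mpr hp
  have hw : 0 ≤ w ⬝ᵥ w := Fintype.sum_nonneg fun i => mul_self_nonneg (w i)
  rw [star_trivial, hQ]
  by_contra! hQ_nonpos
  have hs : s = 0 := by
    by_contra hs
    nlinarith [sq_nonneg (a 0 - p * s), mul_nonneg hη.le hw, mul_pos hp' (sq_pos_of_ne_zero hs)]
  rw [hs] at hQ_nonpos
  have hw0 : w = 0 := dotProduct_self_eq_zero.mp <| le_antisymm (by nlinarith [sq_nonneg (a 0)]) hw
  have hv : v = 0 := by simpa [w, hs] using hw0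
  have ha : a = 0 := funext <| Fin.forall_fin_one.2 <| by
    rw [hw0] at hQ_nonpos
    simpa using hQ_nonpos
  exact hx (by rw [ha, hv, Sum.elim_zero_zero])

end SpinDiffusion

theorem diffusion_matrix_posdef (D p : ℝ) (hD : 0 < D) (hp0 : 0 ≤ p) (hp1 : p < 1)
    (μ : Fin 3 → ℝ) (hμ : (μ 0) ^ 2 + (μ 1) ^ 2 + (μ 2) ^ 2 = 1) :
    let η : ℝ := Real.sqrt (1 - p ^ 2)
    let M : Matrix (Fin 1 ⊕ Fin 3) (Fin 1 ⊕ Fin 3) ℝ :=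
      (D / (1 - p ^ 2)) •
        Matrix.fromBlocks 1 (Matrix.of fun _ j => -p * μ j)
          (Matrix.of fun i _ => -p * μ i)
          (η • (1 : Matrix (Fin 3) (Fin 3) ℝ) + (1 - η) • Matrix.vecMulVec μ μ)
    M.IsSymm ∧ M.PosDef := by
  intro η M
  have hp : p ^ 2 < 1 := by nlinarith
  have hscale : 0 < D / (1 - p ^ 2) := div_pos hD (sub_pos.mpr hp)
  have hη : 0 < η := Real.sqrt_pos.mpr (sub_pos.mpr hp)
  have hμ_unit : μ ⬝ᵥ μ = 1 := by simpa [dotProduct, Fin.sum_univ_three, sq] using hμ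
  exact ⟨(SpinDiffusion.blockMatrix_isSymm p η μ).smul _,
    (SpinDiffusion.blockMatrix_posDef hp hη hμ_unit).smul hscale⟩
end
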